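/- Let h⁻(z,w) = [[1, 0, 0], [(1+2z)/((−1+2z)w), 1, 0], [0, 0, 1]] and h⁺(z,w) = [[(1+z)w, −1/2 + z, 0], [(1+10z)/(2−4z), 0, 1], [0, 1, z⁻¹]] be 3×3 complex matrices. Then: (i) det h⁻(z,w) = 1 for all z, w ∈ ℂ with w ≠ 0 and z ≠ 1/2; (ii) det h⁺(z,w) = −(1+z)w + (1+10z)/(4z) for all z, w ∈ ℂ with z ≠ 0 and z ≠ 1/2; and (iii) det h⁺(z,w) ≠ 0 whenever |z| = 1 and |w| ≤ 1. In particular, h⁺(z,·) extends to an invertible-valued holomorphic function on the closed unit disk in w for each z on the unit circle. -/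

import Mathlib

open Complex Matrix

/-- The left factor `h⁻` of the Wiener–Hopf factorization in the `w`-variable. -/
noncomputable def hWHminus (z w : ℂ) : Matrix (Fin 3) (Fin 3) ℂ :=
  !![1, 0, 0;
     (1 + 2 * z) / ((-1 + 2 * z) * w), 1, 0;
     0, 0, 1]

/-- The right factor `h⁺` of the Wiener–Hopf factorization in the `w`-variable. -/
noncomputable def hWHplus (z w : ℂ) : Matrix (Fin 3) (Fin 3) ℂ :=
  !![(1 + z) * w, -1/2 + z, 0;
     (1 + 10 * z) / (2 - 4 * z), 0, 1;
     0, 1, z⁻¹]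

theorem hWHminus_det (z w : ℂ) : (hWHminus z w).det = 1 := by
  simp [hWHminus, det_fin_three]

theorem hWHplus_det {z : ℂ} (w : ℂ) (hz : z ≠ 1/2) :
    (hWHplus z w).det = -((1 + z) * w) + (1 + 10 * z) / (4 * z) := by
  have hden : (2 : ℂ) - 4 * z ≠ 0 := fun h => hz (by linear_combination -h / 4)
  have hprod : (-1/2 + z) * ((1 + 10 * z) / (2 - 4 * z)) = -(1 + 10 * z) / 4 := by
    rw [mul_div_assoc', div_eq_iff hden]
    ring
  calc (hWHplus z w).det
      = -((1 + z) * w) - (-1/2 + z) * ((1 + 10 * z) / (2 - 4 * z)) * z⁻¹ := by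
        simp [hWHplus, det_fin_three]
    _ = -((1 + z) * w) + (1 + 10 * z) / (4 * z) := by
        rw [hprod]
        ring

theorem norm_one_add_mul_le_two {z w : ℂ} (hz : ‖z‖ = 1) (hw : ‖w‖ ≤ 1) :
    ‖(1 + z) * w‖ ≤ 2 :=
  calc ‖(1 + z) * w‖ = ‖1 + z‖ * ‖w‖ := norm_mul _ _
    _ ≤ (‖(1 : ℂ)‖ + ‖z‖) * 1 := by gcongr; exact norm_add_le _ _
    _ = 2 := by rw [norm_one, hz]; norm_num

theorem nine_div_four_le_norm_one_add_ten_mul_div {z : ℂ} (hz : ‖z‖ = 1) :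
    9 / 4 ≤ ‖(1 + 10 * z) / (4 * z)‖ := by
  have h10 : 9 ≤ ‖1 + 10 * z‖ :=
    calc (9 : ℝ) = ‖10 * z‖ - ‖(-1 : ℂ)‖ := by simp [hz]; norm_num
      _ ≤ ‖1 + 10 * z‖ := by
        simpa [add_comm] using norm_sub_norm_le (10 * z) (-1)
  rw [norm_div, norm_mul, hz, mul_one, show ‖(4 : ℂ)‖ = 4 by norm_num]
  linarith

/-- On `|z| = 1`, `|w| ≤ 1` the constant term `(1 + 10z)/(4z)` has modulus at least `9/4`
and dominates the term `(1 + z) w`, of modulus at most `2`. -/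
theorem hWHplus_det_ne_zero {z w : ℂ} (hz : ‖z‖ = 1) (hw : ‖w‖ ≤ 1) :
    (hWHplus z w).det ≠ 0 := by
  have hz_ne_half : z ≠ 1/2 := fun h => by norm_num [h] at hz
  rw [hWHplus_det w hz_ne_half, neg_add_eq_sub, sub_ne_zero]
  intro heq
  have hlower := nine_div_four_le_norm_one_add_ten_mul_div hz
  rw [heq] at hlower
  linarith [norm_one_add_mul_le_two hz hw]

/-- Invertibility of the Wiener–Hopf factors: `det h⁻ = 1`,
`det h⁺ = −(1+z)w + (1+10z)/(4z)`, and `det h⁺ ≠ 0` for `|z| = 1`, `|w| ≤ 1`. -/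
theorem hWH_factors_invertible :
    (∀ z w : ℂ, w ≠ 0 → z ≠ 1/2 → (hWHminus z w).det = 1) ∧
    (∀ z w : ℂ, z ≠ 0 → z ≠ 1/2 →
      (hWHplus z w).det = -((1 + z) * w) + (1 + 10 * z) / (4 * z)) ∧
    (∀ z w : ℂ, ‖z‖ = 1 → ‖w‖ ≤ 1 → (hWHplus z w).det ≠ 0) :=
  ⟨fun z w _ _ => hWHminus_det z w,
    fun _ w _ hz => hWHplus_det w hz,
    fun _ _ hz hw => hWHplus_det_ne_zero hz hw⟩
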